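/- arXiv:2306.08349 — 6 statements merged into one kernel-verified Lean document; each statement's English description precedes it below -/
import Mathlib

section
/- F(t_max(A)) = q γ S^{−q/p} ω^{(p^*−q)/p^*} (λ_* − λ); in particular, if 0 < λ < λ_*, then F(t_max(A)) > 0. -/
open Filter Topology

/-- `F(t_max(A)) = q γ S^{-q/p} ω^{(p^*-q)/p^*} (λ_* - λ)`; in particular, if
`0 < λ < λ_*`, then `F(t_max(A)) > 0`. -/
theorem stmt_2 (q p pstar a S γ lam ω m A : ℝ)
    (hq : 1 < q) (hqp : q < p) (hppstar : p < pstar)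
    (ha : 0 < a) (hS : 0 < S) (hγ : 0 < γ) (hlam : 0 < lam)
    (hω : 0 < ω) (hm : 0 < m) (hA : 0 < A)
    (lamstar : ℝ)
    (hlamstar : lamstar =
      (m * S) ^ ((pstar - q) / (pstar - p)) / (γ * q * ω ^ ((pstar - q) / pstar))
        * ((pstar - p) / (pstar - q))
        * ((p - q) / ((pstar - q) * a)) ^ ((p - q) / (pstar - p)))
    (F : ℝ → ℝ)
    (hF : ∀ t : ℝ, F t =
      m * t ^ (p - q) * A ^ ((p - q) / p)
        - a * S ^ (-(pstar / p)) * A ^ ((pstar - q) / p) * t ^ (pstar - q)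
        - lam * q * γ * S ^ (-(q / p)) * ω ^ ((pstar - q) / pstar))
    (tmax : ℝ)
    (htmax : tmax =
      (m * (p - q) * S ^ (pstar / p) / (a * (pstar - q))) ^ (1 / (pstar - p))
        * A ^ (-(1 / p))) :
    F tmax = q * γ * S ^ (-(q / p)) * ω ^ ((pstar - q) / pstar) * (lamstar - lam)
      ∧ (lam < lamstar → 0 < F tmax) := by
  have hp : 0 < p := by linarith
  have hpq : 0 < p - q := by linarith
  have hps : 0 < pstar - p := by linarith
  have hpsq : 0 < pstar - q := by linarith
  set α : ℝ := (p - q) / (pstar - p) with hα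
  have hαpos : 0 < α := div_pos hpq hps
  have hαkey : α * (pstar - p) = p - q := by
    rw [hα]; field_simp
  set D : ℝ := (p - q) / ((pstar - q) * a) with hD
  have hDpos : 0 < D := div_pos hpq (by positivity)
  set C : ℝ := m * (p - q) * S ^ (pstar / p) / (a * (pstar - q)) with hC
  have hCpos : 0 < C := by positivity
  have hCeq : C = m * S ^ (pstar / p) * D := by
    rw [hC, hD]; field_simp
  clear_value α D C
  have htm : ∀ r : ℝ, tmax ^ r = C ^ (r / (pstar - p)) * A ^ (-(r / p)) := by
    intro r
    rw [htmax, Real.mul_rpow (by positivity) (by positivity),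
        ← Real.rpow_mul hCpos.le, ← Real.rpow_mul hA.le,
        show 1 / (pstar - p) * r = r / (pstar - p) by ring,
        show -(1 / p) * r = -(r / p) by ring]
  -- first term
  have hAc : ∀ r : ℝ, A ^ (-(r / p)) * A ^ (r / p) = 1 := by
    intro r; rw [← Real.rpow_add hA]; simp
  have hterm1 : m * tmax ^ (p - q) * A ^ ((p - q) / p) = m * C ^ α := by
    rw [htm, hα, mul_assoc, mul_assoc, hAc, mul_one]
  -- second term
  have hSS : S ^ (-(pstar / p)) * S ^ (pstar / p) = 1 := by
    rw [← Real.rpow_add hS]; simp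
  have hexp2 : (pstar - q) / (pstar - p) = α + 1 := by
    rw [hα]; field_simp; ring
  have hterm2 : a * S ^ (-(pstar / p)) * A ^ ((pstar - q) / p) * tmax ^ (pstar - q)
      = (m * (p - q) / (pstar - q)) * C ^ α := by
    rw [htm, hexp2, Real.rpow_add hCpos, Real.rpow_one]
    have hkey : a * S ^ (-(pstar / p)) * C = m * (p - q) / (pstar - q) := by
      calc a * S ^ (-(pstar / p)) * C
          = (S ^ (-(pstar / p)) * S ^ (pstar / p)) * (m * (p - q)) * (a / (a * (pstar - q))) := by
            rw [hC]; ring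
        _ = m * (p - q) / (pstar - q) := by rw [hSS]; field_simp
    calc a * S ^ (-(pstar / p)) * A ^ ((pstar - q) / p) * (C ^ α * C * A ^ (-((pstar - q) / p)))
        = (a * S ^ (-(pstar / p)) * C) * C ^ α * (A ^ (-((pstar - q) / p)) * A ^ ((pstar - q) / p)) := by ring
      _ = (m * (p - q) / (pstar - q)) * C ^ α := by rw [hkey, hAc, mul_one]
  -- lamstar identity
  have hlamkey : q * γ * S ^ (-(q / p)) * ω ^ ((pstar - q) / pstar) * lamstar
      = m * C ^ α * ((pstar - p) / (pstar - q)) := by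
    have hCα : C ^ α = m ^ α * S ^ (pstar * α / p) * D ^ α := by
      rw [hCeq, Real.mul_rpow (by positivity) hDpos.le,
          Real.mul_rpow hm.le (by positivity), ← Real.rpow_mul hS.le,
          show pstar / p * α = pstar * α / p by ring]
    have hmS : (m * S) ^ ((pstar - q) / (pstar - p)) = m * m ^ α * (S * S ^ α) := by
      rw [hexp2, Real.rpow_add (by positivity), Real.rpow_one,
          Real.mul_rpow hm.le hS.le]; ring
    have hSexp : S ^ (-(q / p)) * (S * S ^ α) = S ^ (pstar * α / p) := by
      have h1 : S * S ^ α = S ^ (1 + α) := by rw [Real.rpow_add hS, Real.rpow_one]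
      rw [h1, ← Real.rpow_add hS]
      congr 1
      field_simp
      nlinarith [hαkey]
    have h1 : (q * γ * ω ^ ((pstar - q) / pstar)) / (γ * q * ω ^ ((pstar - q) / pstar)) = 1 := by
      rw [div_eq_one_iff_eq (by positivity : (γ * q * ω ^ ((pstar - q) / pstar)) ≠ 0)]; ring
    rw [hlamstar, hmS, hCα]
    calc q * γ * S ^ (-(q / p)) * ω ^ ((pstar - q) / pstar) *
          (m * m ^ α * (S * S ^ α) / (γ * q * ω ^ ((pstar - q) / pstar)) *
            ((pstar - p) / (pstar - q)) * D ^ α)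
        = (S ^ (-(q / p)) * (S * S ^ α)) * m * m ^ α * D ^ α * ((pstar - p) / (pstar - q)) *
            ((q * γ * ω ^ ((pstar - q) / pstar)) / (γ * q * ω ^ ((pstar - q) / pstar))) := by
          ring
      _ = m * (m ^ α * S ^ (pstar * α / p) * D ^ α) * ((pstar - p) / (pstar - q)) := by
          rw [hSexp, h1, mul_one]; ring
  have hmain : F tmax = q * γ * S ^ (-(q / p)) * ω ^ ((pstar - q) / pstar) * (lamstar - lam) := by
    rw [hF, hterm1, hterm2]
    have hx : (p - q) / (pstar - q) + (pstar - p) / (pstar - q) = 1 := by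
      field_simp
      ring
    linear_combination (-(m * C ^ α)) * hx - hlamkey
  refine ⟨hmain, fun hlt => ?_⟩
  rw [hmain]
  have : 0 < lamstar - lam := by linarith
  positivity
end

section
/- Assume B > 0 and each M_i satisfies condition (H₁): lim_{t→∞} t^{1−p^*/p} M_i(t) = 0. Then lim_{t→0⁺} ψ(t) = −λ q C, and ψ(t) → −∞ as t → ∞. -/
/-!
Near `0⁺` every power `t ^ (p - q)`, `t ^ (p^* - q)` with positive exponent vanishes, while
`M_i (t ^ p A_i) → M_i 0` by continuity, so only the constant `-λqC` survives. At infinity factor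
`ψ t + λqC = t ^ (p^* - q) (t ^ (p - p^*) Σ A_i M_i (t ^ p A_i) - B)`: substituting `s = t ^ p A_i`
in (H₁) shows that each `t ^ (p - p^*) M_i (t ^ p A_i)` tends to `0`, so the bracket tends to
`-B < 0` and the product to `-∞`.
-/

open Filter Topology

theorem Real.tendsto_rpow_nhds_zero {y : ℝ} (hy : 0 < y) :
    Tendsto (fun t : ℝ => t ^ y) (𝓝 0) (𝓝 0) := by
  simpa [Real.zero_rpow hy.ne'] using
    (Real.continuousAt_rpow_const 0 y (Or.inr hy.le)).tendsto

theorem ContinuousOn.tendsto_comp_rpow_mul_nhdsGT_zero {M : ℝ → ℝ} {p a : ℝ}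
    (hM : ContinuousOn M (Set.Ici 0)) (hp : 0 < p) (ha : 0 ≤ a) :
    Tendsto (fun t : ℝ => M (t ^ p * a)) (𝓝[>] 0) (𝓝 (M 0)) := by
  have harg : Tendsto (fun t : ℝ => t ^ p * a) (𝓝[>] 0) (𝓝[Set.Ici 0] 0) := by
    refine tendsto_nhdsWithin_iff.2 ⟨?_, ?_⟩
    · simpa using ((Real.tendsto_rpow_nhds_zero hp).mono_left nhdsWithin_le_nhds).mul_const a
    · filter_upwards [self_mem_nhdsWithin] with t ht
      exact mul_nonneg (Real.rpow_nonneg (le_of_lt ht) p) ha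
  exact (hM 0 Set.self_mem_Ici).tendsto.comp harg

theorem tendsto_rpow_sub_mul_comp_rpow_mul_atTop {M : ℝ → ℝ} {p r a : ℝ} (hp : 0 < p)
    (ha : 0 < a) (hM : Tendsto (fun s : ℝ => s ^ (1 - r / p) * M s) atTop (𝓝 0)) :
    Tendsto (fun t : ℝ => t ^ (p - r) * M (t ^ p * a)) atTop (𝓝 0) := by
  have harg : Tendsto (fun t : ℝ => t ^ p * a) atTop atTop :=
    (tendsto_rpow_atTop hp).atTop_mul_const ha
  have h := (hM.comp harg).const_mul (a ^ (r / p - 1))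
  rw [mul_zero] at h
  refine h.congr' ?_
  filter_upwards [eventually_gt_atTop 0] with t ht
  have hpow : (t ^ p) ^ (1 - r / p) = t ^ (p - r) := by
    rw [← Real.rpow_mul ht.le]
    congr 1
    field_simp
  have ha_inv : a ^ (r / p - 1) * a ^ (1 - r / p) = 1 := by
    rw [← Real.rpow_add ha]
    norm_num
  simp only [Function.comp_apply]
  rw [Real.mul_rpow (Real.rpow_nonneg ht.le p) ha.le, hpow]
  linear_combination (t ^ (p - r) * M (t ^ p * a)) * ha_inv

section Fibering

variable {q p r c B : ℝ} {K : ℝ → ℝ}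

theorem tendsto_fibering_nhdsGT_zero (hqp : q < p) (hpr : p < r) {K₀ : ℝ}
    (hK : Tendsto K (𝓝[>] 0) (𝓝 K₀)) :
    Tendsto (fun t : ℝ => t ^ (p - q) * K t - t ^ (r - q) * B - c) (𝓝[>] 0) (𝓝 (-c)) := by
  have hpow : ∀ y : ℝ, 0 < y → Tendsto (fun t : ℝ => t ^ y) (𝓝[>] 0) (𝓝 0) := fun y hy =>
    (Real.tendsto_rpow_nhds_zero hy).mono_left nhdsWithin_le_nhds
  have h := (((hpow (p - q) (by linarith)).mul hK).sub
    ((hpow (r - q) (by linarith)).mul_const B)).sub_const c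
  simpa using h

theorem tendsto_fibering_atTop (hqp : q < p) (hpr : p < r) (hB : 0 < B)
    (hK : Tendsto (fun t : ℝ => t ^ (p - r) * K t) atTop (𝓝 0)) :
    Tendsto (fun t : ℝ => t ^ (p - q) * K t - t ^ (r - q) * B - c) atTop atBot := by
  have hbracket : Tendsto (fun t : ℝ => t ^ (p - r) * K t - B) atTop (𝓝 (-B)) := by
    simpa using hK.sub_const B
  have hmain := (tendsto_rpow_atTop (by linarith : 0 < r - q)).atTop_mul_neg
    (neg_lt_zero.2 hB) hbracket
  refine (tendsto_atBot_add_const_right atTop (-c) hmain).congr' ?_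
  filter_upwards [eventually_gt_atTop 0] with t ht
  have hsplit : t ^ (p - q) = t ^ (r - q) * t ^ (p - r) := by
    rw [← Real.rpow_add ht]
    ring_nf
  rw [hsplit]
  ring

end Fibering

theorem stmt_4_general (q p pstar lam A₁ A₂ B C : ℝ)
    (M₁ M₂ : ℝ → ℝ)
    (hq : 1 < q) (hqp : q < p) (hppstar : p < pstar)
    (hM₁c : ContinuousOn M₁ (Set.Ici 0)) (hM₂c : ContinuousOn M₂ (Set.Ici 0))
    (hH₁M₁ : Tendsto (fun t : ℝ => t ^ (1 - pstar / p) * M₁ t) atTop (𝓝 0))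
    (hH₁M₂ : Tendsto (fun t : ℝ => t ^ (1 - pstar / p) * M₂ t) atTop (𝓝 0))
    (hA₁ : 0 < A₁) (hA₂ : 0 < A₂)
    (hB : 0 < B)
    (ψ : ℝ → ℝ)
    (hψ : ∀ t : ℝ, ψ t =
      t ^ (p - q) * (A₁ * M₁ (t ^ p * A₁) + A₂ * M₂ (t ^ p * A₂))
        - t ^ (pstar - q) * B - lam * q * C) :
    Tendsto ψ (𝓝[>] (0 : ℝ)) (𝓝 (-(lam * q * C))) ∧
      Tendsto ψ atTop atBot := by
  have hp : 0 < p := by linarith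
  rw [funext hψ]
  constructor
  · refine tendsto_fibering_nhdsGT_zero hqp hppstar (K₀ := A₁ * M₁ 0 + A₂ * M₂ 0) ?_
    exact ((hM₁c.tendsto_comp_rpow_mul_nhdsGT_zero hp hA₁.le).const_mul A₁).add
      ((hM₂c.tendsto_comp_rpow_mul_nhdsGT_zero hp hA₂.le).const_mul A₂)
  · refine tendsto_fibering_atTop hqp hppstar hB ?_
    have h := ((tendsto_rpow_sub_mul_comp_rpow_mul_atTop hp hA₁ hH₁M₁).const_mul A₁).add
      ((tendsto_rpow_sub_mul_comp_rpow_mul_atTop hp hA₂ hH₁M₂).const_mul A₂)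
    simp only [mul_zero, add_zero] at h
    exact h.congr fun t => by ring

/-- If `B > 0` and each Kirchhoff function `M_i` satisfies (H₁):
`lim_{t→∞} t^{1-p^*/p} M_i(t) = 0`, then `ψ(t) → -λqC` as `t → 0⁺` and
`ψ(t) → -∞` as `t → ∞`. -/
theorem stmt_4 (q p pstar lam m₁ m₂ m A₁ A₂ A B C : ℝ)
    (M₁ M₂ : ℝ → ℝ)
    (hq : 1 < q) (hqp : q < p) (hppstar : p < pstar)
    (hlam : 0 < lam)
    (hM₁c : ContinuousOn M₁ (Set.Ici 0)) (hM₂c : ContinuousOn M₂ (Set.Ici 0))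
    (hm₁ : 0 < m₁) (hm₂ : 0 < m₂)
    (hM₁ : ∀ t : ℝ, 0 ≤ t → m₁ ≤ M₁ t) (hM₂ : ∀ t : ℝ, 0 ≤ t → m₂ ≤ M₂ t)
    (hm : m = min m₁ m₂)
    (hH₁M₁ : Tendsto (fun t : ℝ => t ^ (1 - pstar / p) * M₁ t) atTop (𝓝 0))
    (hH₁M₂ : Tendsto (fun t : ℝ => t ^ (1 - pstar / p) * M₂ t) atTop (𝓝 0))
    (hA₁ : 0 < A₁) (hA₂ : 0 < A₂) (hA : A = A₁ + A₂)
    (hB : 0 < B) (hC : 0 ≤ C)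
    (ψ : ℝ → ℝ)
    (hψ : ∀ t : ℝ, ψ t =
      t ^ (p - q) * (A₁ * M₁ (t ^ p * A₁) + A₂ * M₂ (t ^ p * A₂))
        - t ^ (pstar - q) * B - lam * q * C) :
    Tendsto ψ (𝓝[>] (0 : ℝ)) (𝓝 (-(lam * q * C))) ∧
      Tendsto ψ atTop atBot :=
  stmt_4_general q p pstar lam A₁ A₂ B C M₁ M₂ hq hqp hppstar hM₁c hM₂c hH₁M₁ hH₁M₂ hA₁ hA₂ hB ψ hψ
end

section
/- Assume each M_i satisfies condition (H₁): lim_{t→∞} t^{1−p^*/p} M_i(t) = 0; assume B > 0, C > 0, the Sobolev-type bounds B ≤ a S^{−p^*/p} A^{p^*/p} and C ≤ γ S^{−q/p} ω^{(p^*−q)/p^*} A^{q/p}, and 0 < λ < λ_*. Then there exist t₁ and t₂ with 0 < t₁ < t_max(A) < t₂ and ψ(t₁) = ψ(t₂) = 0, where t_max(A) = (m(p−q)S^{p^*/p}/(a(p^*−q)))^{1/(p^*−p)} A^{−1/p}. (This is the core of the paper's Lemma producing points of the Nehari submanifolds N_λ⁺ and N_λ⁻.) -/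
/-!
The value `t_max(A)` maximizes `t ↦ t^{p-q} m A - t^{p^*-q} a S^{-p^*/p} A^{p^*/p}`, and
`λ_* q γ S^{-q/p} ω^{(p^*-q)/p^*} A^{q/p}` is exactly the maximal value. Since the Kirchhoff
factor is at least `m A`, the Sobolev-type bounds on `B` and `C` together with `λ < λ_*` make
`ψ(t_max) > 0`. On the other hand `ψ(0) = -λ q C < 0`, and `ψ(t) < 0` for large `t` because
(H₁) makes the Kirchhoff term negligible against `t^{p^*-q} B`. The intermediate value theorem
gives one zero on each side of `t_max`.
-/

open Filter Topology Set

theorem exists_zeros_of_neg_of_pos_of_eventually_neg {f : ℝ → ℝ} {a s : ℝ} (has : a < s)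
    (hf : ContinuousOn f (Ici a)) (ha : f a < 0) (hs : 0 < f s)
    (hinf : ∀ᶠ t in atTop, f t < 0) :
    ∃ t₁ t₂, a < t₁ ∧ t₁ < s ∧ s < t₂ ∧ f t₁ = 0 ∧ f t₂ = 0 := by
  obtain ⟨t₁, ⟨hat₁, ht₁s⟩, hft₁⟩ :=
    intermediate_value_Ioo has.le (hf.mono Icc_subset_Ici_self) ⟨ha, hs⟩
  obtain ⟨T, hfT, hsT⟩ := (hinf.and (eventually_gt_atTop s)).exists
  obtain ⟨t₂, ⟨hst₂, -⟩, hft₂⟩ :=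
    intermediate_value_Ioo' hsT.le (hf.mono fun x hx => has.le.trans hx.1) ⟨hfT, hs⟩
  exact ⟨t₁, t₂, hat₁, ht₁s, hst₂, hft₁, hft₂⟩

noncomputable def fibering (K : ℝ → ℝ) (r s B c t : ℝ) : ℝ :=
  t ^ r * K t - t ^ s * B - c

section Fibering

variable {K : ℝ → ℝ} {r s B c : ℝ}

theorem fibering_zero (hr : r ≠ 0) (hs : s ≠ 0) : fibering K r s B c 0 = -c := by
  simp [fibering, Real.zero_rpow hr, Real.zero_rpow hs]

theorem ContinuousOn.fibering (hK : ContinuousOn K (Ici 0)) (hr : 0 ≤ r) (hs : 0 ≤ s) :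
    ContinuousOn (fibering K r s B c) (Ici 0) :=
  (((continuousOn_id.rpow_const fun _ _ => Or.inr hr).mul hK).sub
    ((continuousOn_id.rpow_const fun _ _ => Or.inr hs).mul continuousOn_const)).sub
    continuousOn_const

theorem eventually_fibering_neg (hK : Tendsto (fun t => t ^ (r - s) * K t) atTop (𝓝 0))
    (hB : 0 < B) (hc : 0 ≤ c) : ∀ᶠ t in atTop, fibering K r s B c t < 0 := by
  filter_upwards [hK.eventually_lt_const hB, eventually_gt_atTop 0] with t hKt ht
  have hsplit : t ^ r * K t = t ^ s * (t ^ (r - s) * K t) := by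
    rw [← mul_assoc, ← Real.rpow_add ht, add_sub_cancel]
  have hts : 0 < t ^ s := Real.rpow_pos_of_pos ht s
  rw [fibering, hsplit]
  nlinarith [mul_lt_mul_of_pos_left hKt hts]

end Fibering

theorem min_mul_add_le_mul_add {m₁ m₂ x₁ x₂ A₁ A₂ : ℝ} (h₁ : m₁ ≤ x₁) (h₂ : m₂ ≤ x₂)
    (hA₁ : 0 ≤ A₁) (hA₂ : 0 ≤ A₂) : min m₁ m₂ * (A₁ + A₂) ≤ A₁ * x₁ + A₂ * x₂ := by
  nlinarith [min_le_left m₁ m₂, min_le_right m₁ m₂]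

section Kirchhoff

variable {M : ℝ → ℝ} {p pstar A : ℝ}

theorem ContinuousOn.comp_rpow_mul (hM : ContinuousOn M (Ici 0)) (hp : 0 ≤ p) (hA : 0 ≤ A) :
    ContinuousOn (fun t => M (t ^ p * A)) (Ici 0) :=
  hM.comp ((continuousOn_id.rpow_const fun _ _ => Or.inr hp).mul continuousOn_const)
    fun _ ht => mul_nonneg (Real.rpow_nonneg ht p) hA

theorem tendsto_rpow_sub_mul_comp_rpow_mul (hp : 0 < p) (hA : 0 < A)
    (hM : Tendsto (fun t => t ^ (1 - pstar / p) * M t) atTop (𝓝 0)) :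
    Tendsto (fun t => t ^ (p - pstar) * (A * M (t ^ p * A))) atTop (𝓝 0) := by
  have hinner : Tendsto (fun t : ℝ => t ^ p * A) atTop atTop :=
    (tendsto_rpow_atTop hp).atTop_mul_const hA
  have hlim := (hM.comp hinner).const_mul (A ^ (pstar / p))
  rw [mul_zero] at hlim
  refine hlim.congr' ?_
  filter_upwards [eventually_gt_atTop 0] with t ht
  have hpow : (t ^ p * A) ^ (1 - pstar / p) = t ^ (p - pstar) * A ^ (1 - pstar / p) := by
    rw [Real.mul_rpow (by positivity) hA.le, ← Real.rpow_mul ht.le]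
    congr 2
    field_simp
  have hA_rpow : A ^ (pstar / p) * A ^ (1 - pstar / p) = A := by
    rw [← Real.rpow_add hA, add_sub_cancel, Real.rpow_one]
  simp only [Function.comp_apply, hpow]
  linear_combination (t ^ (p - pstar) * M (t ^ p * A)) * hA_rpow

end Kirchhoff

noncomputable def tMax (q p pstar a S m A : ℝ) : ℝ :=
  (m * (p - q) * S ^ (pstar / p) / (a * (pstar - q))) ^ (1 / (pstar - p)) * A ^ (-(1 / p))

noncomputable def lamStar (q p pstar a S γ ω m : ℝ) : ℝ :=
  (m * S) ^ ((pstar - q) / (pstar - p)) / (γ * q * ω ^ ((pstar - q) / pstar))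
    * ((pstar - p) / (pstar - q)) * ((p - q) / ((pstar - q) * a)) ^ ((p - q) / (pstar - p))

section Identities

variable {q p pstar a S γ ω m A : ℝ}

theorem tMax_rpow_mul_sobolev_eq (hq : 0 < q) (hqp : q < p) (hppstar : p < pstar)
    (ha : 0 < a) (hS : 0 < S) (hm : 0 < m) (hA : 0 < A) :
    tMax q p pstar a S m A ^ (pstar - q) * (a * S ^ (-(pstar / p)) * A ^ (pstar / p))
      = (p - q) / (pstar - q) * (tMax q p pstar a S m A ^ (p - q) * (m * A)) := by
  have hpq : 0 < p - q := by linarith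
  have hPq : 0 < pstar - q := by linarith
  have hPp : 0 < pstar - p := by linarith
  have hp : p ≠ 0 := by linarith
  unfold tMax
  refine Real.log_injOn_pos (mem_Ioi.2 (by positivity)) (mem_Ioi.2 (by positivity)) ?_
  simp (disch := positivity) only [Real.log_mul, Real.log_rpow, Real.log_div]
  field_simp
  ring

theorem lamStar_mul_sobolev_eq (hq : 0 < q) (hqp : q < p) (hppstar : p < pstar)
    (ha : 0 < a) (hS : 0 < S) (hγ : 0 < γ) (hω : 0 < ω) (hm : 0 < m) (hA : 0 < A) :
    lamStar q p pstar a S γ ω m * q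
        * (γ * S ^ (-(q / p)) * ω ^ ((pstar - q) / pstar) * A ^ (q / p)) =
      (pstar - p) / (pstar - q) * (tMax q p pstar a S m A ^ (p - q) * (m * A)) := by
  have hpq : 0 < p - q := by linarith
  have hPq : 0 < pstar - q := by linarith
  have hPp : 0 < pstar - p := by linarith
  have hp : p ≠ 0 := by linarith
  unfold tMax lamStar
  refine Real.log_injOn_pos (mem_Ioi.2 (by positivity)) (mem_Ioi.2 (by positivity)) ?_
  simp (disch := positivity) only [Real.log_mul, Real.log_rpow, Real.log_div]
  field_simp
  ring

end Identities

theorem tMax_pos {q p pstar a S m A : ℝ} (hqp : q < p) (hppstar : p < pstar) (ha : 0 < a)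
    (hS : 0 < S) (hm : 0 < m) (hA : 0 < A) : 0 < tMax q p pstar a S m A := by
  have hpq : 0 < p - q := by linarith
  have hPq : 0 < pstar - q := by linarith
  unfold tMax
  positivity

theorem fibering_tMax_pos {q p pstar a S γ ω m A B C lam : ℝ} {K : ℝ → ℝ} (hq : 0 < q)
    (hqp : q < p) (hppstar : p < pstar) (ha : 0 < a) (hS : 0 < S) (hγ : 0 < γ) (hω : 0 < ω)
    (hm : 0 < m) (hA : 0 < A) (hK : m * A ≤ K (tMax q p pstar a S m A))
    (hBle : B ≤ a * S ^ (-(pstar / p)) * A ^ (pstar / p))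
    (hCle : C ≤ γ * S ^ (-(q / p)) * ω ^ ((pstar - q) / pstar) * A ^ (q / p))
    (hlam : 0 ≤ lam) (hlamlt : lam < lamStar q p pstar a S γ ω m) :
    0 < fibering K (p - q) (pstar - q) B (lam * q * C) (tMax q p pstar a S m A) := by
  set t := tMax q p pstar a S m A
  have ht : 0 < t := tMax_pos hqp hppstar ha hS hm hA
  have hCbound : 0 < γ * S ^ (-(q / p)) * ω ^ ((pstar - q) / pstar) * A ^ (q / p) := by
    positivity
  have hsum : t ^ (p - q) * (m * A) =
      t ^ (pstar - q) * (a * S ^ (-(pstar / p)) * A ^ (pstar / p))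
        + lamStar q p pstar a S γ ω m * q
        * (γ * S ^ (-(q / p)) * ω ^ ((pstar - q) / pstar) * A ^ (q / p)) := by
    have hPq : pstar - q ≠ 0 := by linarith
    rw [tMax_rpow_mul_sobolev_eq hq hqp hppstar ha hS hm hA,
      lamStar_mul_sobolev_eq hq hqp hppstar ha hS hγ hω hm hA]
    field_simp
    ring
  have hKterm := mul_le_mul_of_nonneg_left hK (Real.rpow_pos_of_pos ht (p - q)).le
  have hBterm := mul_le_mul_of_nonneg_left hBle (Real.rpow_pos_of_pos ht (pstar - q)).le
  have hCterm := mul_le_mul_of_nonneg_left hCle (mul_nonneg hlam hq.le)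
  rw [fibering]
  nlinarith [mul_lt_mul_of_pos_right hlamlt (mul_pos hq hCbound)]

/-- Core of the paper's Lemma 2.2: for `0 < λ < λ_*` there exist
`0 < t₁ < t_max(A) < t₂` with `ψ(t₁) = ψ(t₂) = 0`. -/
theorem stmt_5 (q p pstar a S γ lam ω m₁ m₂ m A₁ A₂ A B C : ℝ)
    (M₁ M₂ : ℝ → ℝ)
    (hq : 1 < q) (hqp : q < p) (hppstar : p < pstar)
    (ha : 0 < a) (hS : 0 < S) (hγ : 0 < γ) (hω : 0 < ω)
    (hM₁c : ContinuousOn M₁ (Set.Ici 0)) (hM₂c : ContinuousOn M₂ (Set.Ici 0))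
    (hm₁ : 0 < m₁) (hm₂ : 0 < m₂)
    (hM₁ : ∀ t : ℝ, 0 ≤ t → m₁ ≤ M₁ t) (hM₂ : ∀ t : ℝ, 0 ≤ t → m₂ ≤ M₂ t)
    (hm : m = min m₁ m₂)
    (hH₁M₁ : Tendsto (fun t : ℝ => t ^ (1 - pstar / p) * M₁ t) atTop (𝓝 0))
    (hH₁M₂ : Tendsto (fun t : ℝ => t ^ (1 - pstar / p) * M₂ t) atTop (𝓝 0))
    (hA₁ : 0 < A₁) (hA₂ : 0 < A₂) (hA : A = A₁ + A₂)
    (hB : 0 < B) (hC : 0 < C)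
    (hBle : B ≤ a * S ^ (-(pstar / p)) * A ^ (pstar / p))
    (hCle : C ≤ γ * S ^ (-(q / p)) * ω ^ ((pstar - q) / pstar) * A ^ (q / p))
    (lamstar : ℝ)
    (hlamstar : lamstar =
      (m * S) ^ ((pstar - q) / (pstar - p)) / (γ * q * ω ^ ((pstar - q) / pstar))
        * ((pstar - p) / (pstar - q))
        * ((p - q) / ((pstar - q) * a)) ^ ((p - q) / (pstar - p)))
    (hlam : 0 < lam) (hlamlt : lam < lamstar)
    (tmax : ℝ)
    (htmax : tmax =
      (m * (p - q) * S ^ (pstar / p) / (a * (pstar - q))) ^ (1 / (pstar - p))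
        * A ^ (-(1 / p)))
    (ψ : ℝ → ℝ)
    (hψ : ∀ t : ℝ, ψ t =
      t ^ (p - q) * (A₁ * M₁ (t ^ p * A₁) + A₂ * M₂ (t ^ p * A₂))
        - t ^ (pstar - q) * B - lam * q * C) :
    ∃ t₁ t₂ : ℝ, 0 < t₁ ∧ t₁ < tmax ∧ tmax < t₂ ∧ ψ t₁ = 0 ∧ ψ t₂ = 0 := by
  have hq0 : 0 < q := by linarith
  have hp : 0 < p := by linarith
  have hm0 : 0 < m := hm ▸ lt_min hm₁ hm₂
  have hA0 : 0 < A := hA ▸ add_pos hA₁ hA₂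
  have hc : 0 < lam * q * C := by positivity
  have htmax_pos : 0 < tMax q p pstar a S m A := tMax_pos hqp hppstar ha hS hm0 hA0
  set K := fun t : ℝ => A₁ * M₁ (t ^ p * A₁) + A₂ * M₂ (t ^ p * A₂) with hK
  obtain rfl : ψ = fibering K (p - q) (pstar - q) B (lam * q * C) := funext hψ
  have hKcont : ContinuousOn K (Ici 0) :=
    (continuousOn_const.mul (hM₁c.comp_rpow_mul hp.le hA₁.le)).add
      (continuousOn_const.mul (hM₂c.comp_rpow_mul hp.le hA₂.le))
  have hKdecay : Tendsto (fun t => t ^ ((p - q) - (pstar - q)) * K t) atTop (𝓝 0) := by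
    simpa only [hK, sub_sub_sub_cancel_right, mul_add, add_zero] using
      (tendsto_rpow_sub_mul_comp_rpow_mul hp hA₁ hH₁M₁).add
        (tendsto_rpow_sub_mul_comp_rpow_mul hp hA₂ hH₁M₂)
  have hKbound (t : ℝ) (ht : 0 ≤ t) : m * A ≤ K t :=
    hm ▸ hA ▸ min_mul_add_le_mul_add (hM₁ _ (by positivity)) (hM₂ _ (by positivity))
      hA₁.le hA₂.le
  subst htmax hlamstar
  exact exists_zeros_of_neg_of_pos_of_eventually_neg htmax_pos
    (hKcont.fibering (by linarith) (by linarith))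
    (by rw [fibering_zero (by linarith) (by linarith)]; linarith)
    (fibering_tMax_pos hq0 hqp hppstar ha hS hγ hω hm0 hA0 (hKbound _ htmax_pos.le) hBle hCle
      hlam.le hlamlt)
    (eventually_fibering_neg hKdecay hB hc.le)
end

section
/- Assume M₁, M₂ are moreover continuously differentiable on (0,∞), the Sobolev-type bounds B ≤ a S^{−p^*/p} A^{p^*/p} and C ≤ γ S^{−q/p} ω^{(p^*−q)/p^*} A^{q/p} hold, and that the Nehari relation A₁M₁(A₁) + A₂M₂(A₂) = B + λqC and the degeneracy relation p(A₁²M₁′(A₁) + A₂²M₂′(A₂)) − (p^*−p)B + λq(p−q)C = 0 hold (the latter expresses φ″_{u,v}(1) = 0 for a point of N_λ⁰). Then m A^{(p−q)/p} − a S^{−p^*/p} A^{(p^*−q)/p} ≤ λ q γ S^{−q/p} ω^{(p^*−q)/p^*}. -/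
open Filter Topology

/-- If a point satisfies the Nehari relation and the degeneracy relation
(`φ''_{u,v}(1) = 0`, i.e. a point of `N_λ⁰`), then
`m A^{(p-q)/p} - a S^{-p^*/p} A^{(p^*-q)/p} ≤ λ q γ S^{-q/p} ω^{(p^*-q)/p^*}`. -/
theorem stmt_6 (q p pstar a S γ lam ω m₁ m₂ m A₁ A₂ A B C : ℝ)
    (M₁ M₂ M₁' M₂' : ℝ → ℝ)
    (hq : 1 < q) (hqp : q < p) (hppstar : p < pstar)
    (ha : 0 < a) (hS : 0 < S) (hγ : 0 < γ) (hlam : 0 < lam) (hω : 0 < ω)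
    (hM₁c : ContinuousOn M₁ (Set.Ici 0)) (hM₂c : ContinuousOn M₂ (Set.Ici 0))
    (hm₁ : 0 < m₁) (hm₂ : 0 < m₂)
    (hM₁ : ∀ t : ℝ, 0 ≤ t → m₁ ≤ M₁ t) (hM₂ : ∀ t : ℝ, 0 ≤ t → m₂ ≤ M₂ t)
    (hm : m = min m₁ m₂)
    (hM₁d : ∀ x ∈ Set.Ioi (0 : ℝ), HasDerivAt M₁ (M₁' x) x)
    (hM₂d : ∀ x ∈ Set.Ioi (0 : ℝ), HasDerivAt M₂ (M₂' x) x)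
    (hM₁'c : ContinuousOn M₁' (Set.Ioi 0)) (hM₂'c : ContinuousOn M₂' (Set.Ioi 0))
    (hA₁ : 0 < A₁) (hA₂ : 0 < A₂) (hA : A = A₁ + A₂)
    (hB : 0 ≤ B) (hC : 0 ≤ C)
    (hBle : B ≤ a * S ^ (-(pstar / p)) * A ^ (pstar / p))
    (hCle : C ≤ γ * S ^ (-(q / p)) * ω ^ ((pstar - q) / pstar) * A ^ (q / p))
    (hNehari : A₁ * M₁ A₁ + A₂ * M₂ A₂ = B + lam * q * C)
    (hDegenerate :
      p * (A₁ ^ 2 * M₁' A₁ + A₂ ^ 2 * M₂' A₂) - (pstar - p) * B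
        + lam * q * (p - q) * C = 0) :
    m * A ^ ((p - q) / p) - a * S ^ (-(pstar / p)) * A ^ ((pstar - q) / p)
      ≤ lam * q * γ * S ^ (-(q / p)) * ω ^ ((pstar - q) / pstar) := by
  have hp0 : (0:ℝ) < p := by linarith
  have hA0 : 0 < A := by rw [hA]; linarith
  have hlq : 0 < lam * q := by positivity
  have key : m * A ≤ a * S ^ (-(pstar / p)) * A ^ (pstar / p)
      + lam * q * (γ * S ^ (-(q / p)) * ω ^ ((pstar - q) / pstar) * A ^ (q / p)) := by
    have h1 : m * A ≤ A₁ * M₁ A₁ + A₂ * M₂ A₂ := by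
      have hm1 : m ≤ M₁ A₁ := le_trans (hm ▸ min_le_left _ _) (hM₁ A₁ hA₁.le)
      have hm2 : m ≤ M₂ A₂ := le_trans (hm ▸ min_le_right _ _) (hM₂ A₂ hA₂.le)
      have := mul_le_mul_of_nonneg_left hm1 hA₁.le
      have := mul_le_mul_of_nonneg_left hm2 hA₂.le
      rw [hA]; nlinarith
    have h2 : lam * q * C ≤ lam * q * (γ * S ^ (-(q / p)) * ω ^ ((pstar - q) / pstar) * A ^ (q / p)) :=
      mul_le_mul_of_nonneg_left hCle hlq.le
    linarith [hNehari ▸ h1]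
  have hAq : (0:ℝ) < A ^ (q / p) := Real.rpow_pos_of_pos hA0 _
  rw [← mul_le_mul_iff_of_pos_right hAq, sub_mul]
  have e1 : m * A ^ ((p - q) / p) * A ^ (q / p) = m * A := by
    rw [mul_assoc, ← Real.rpow_add hA0]
    have : (p - q) / p + q / p = 1 := by field_simp; ring
    rw [this, Real.rpow_one]
  have e2 : a * S ^ (-(pstar / p)) * A ^ ((pstar - q) / p) * A ^ (q / p)
      = a * S ^ (-(pstar / p)) * A ^ (pstar / p) := by
    rw [mul_assoc, ← Real.rpow_add hA0]
    have : (pstar - q) / p + q / p = pstar / p := by field_simp; ring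
    rw [this]
  rw [e1, e2]
  nlinarith [key]
end

section
/- Assume A₁ > 0, A₂ > 0, B > 0, a > 0, S > 0 with B ≤ a S^{−p^*/p} (A₁+A₂)^{p^*/p}. Then there exists t₀ > 0 such that (1/p)(M̂₁(t₀^p A₁) + M̂₂(t₀^p A₂)) − (t₀^{p^*}/p^*) B = (s/n − (θ−1)/(θp)) · a^{−n/(sp^*)} (mS/θ)^{n/(sp)}. (This is the paper's Proposition 3.1 with the Sobolev inequality B ≤ a S^{−p^*/p} A^{p^*/p} as hypothesis.) -/
open Filter Topology
open MeasureTheory Set intervalIntegral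

private lemma prim_lower {M : ℝ → ℝ} {m u : ℝ} (hc : ContinuousOn M (Set.Ici 0))
    (hm : ∀ t, 0 ≤ t → m ≤ M t) (hu : 0 ≤ u) :
    m * u ≤ ∫ τ in (0:ℝ)..u, M τ := by
  have hint : IntervalIntegrable M MeasureTheory.volume 0 u :=
    (hc.mono (by rw [Set.uIcc_of_le hu]; exact fun x hx => hx.1)).intervalIntegrable
  have h := intervalIntegral.integral_mono_on hu (_root_.intervalIntegrable_const (c := m)) hint
    (fun x hx => hm x hx.1)
  simpa [mul_comm] using h

private lemma prim_deriv {M : ℝ → ℝ} (hc : ContinuousOn M (Set.Ici 0)) {x : ℝ} (hx : 0 < x) :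
    HasDerivAt (fun u => ∫ τ in (0:ℝ)..u, M τ) (M x) x := by
  have hint : IntervalIntegrable M MeasureTheory.volume 0 x :=
    (hc.mono (by rw [Set.uIcc_of_le hx.le]; exact fun y hy => hy.1)).intervalIntegrable
  have hmeas := ContinuousOn.stronglyMeasurableAtFilter (μ := MeasureTheory.volume)
    isOpen_Ioi (hc.mono (fun y (hy : y ∈ Set.Ioi 0) => le_of_lt hy)) x hx
  exact intervalIntegral.integral_hasDerivAt_right hint hmeas
    (hc.continuousAt (Ici_mem_nhds hx))

private lemma prim_growth {M : ℝ → ℝ} {θ : ℝ} (hc : ContinuousOn M (Set.Ici 0))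
    (hK : ∀ t, 0 < t → M t * t ≤ θ * ∫ τ in (0:ℝ)..t, M τ)
    {u : ℝ} (hu : 1 ≤ u) :
    (∫ τ in (0:ℝ)..u, M τ) ≤ (∫ τ in (0:ℝ)..1, M τ) * u ^ θ := by
  set F := fun v => ∫ τ in (0:ℝ)..v, M τ with hF
  set G := fun v : ℝ => F v * v ^ (-θ) with hG
  have hGd : ∀ x : ℝ, 0 < x → HasDerivAt G (M x * x ^ (-θ) + F x * (-θ * x ^ (-θ - 1))) x := by
    intro x hx
    exact (prim_deriv hc hx).mul (Real.hasDerivAt_rpow_const (Or.inl hx.ne'))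
  have hanti : AntitoneOn G (Set.Ici 1) := by
    apply antitoneOn_of_deriv_nonpos (convex_Ici 1)
    · intro x hx
      exact ((hGd x (lt_of_lt_of_le one_pos hx)).continuousAt).continuousWithinAt
    · intro x hx
      rw [interior_Ici] at hx
      exact ((hGd x (lt_trans one_pos hx)).differentiableAt).differentiableWithinAt
    · intro x hx
      rw [interior_Ici] at hx
      have hx0 : (0:ℝ) < x := lt_trans one_pos hx
      rw [(hGd x hx0).deriv]
      have key : M x * x ^ (-θ) + F x * (-θ * x ^ (-θ - 1))
          = (M x * x - θ * F x) * x ^ (-θ - 1) := by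
        have hxx : x ^ (-θ) = x * x ^ (-θ - 1) := by
          have h := Real.rpow_add hx0 1 (-θ - 1)
          rw [Real.rpow_one] at h
          rw [← h]; norm_num
        rw [hxx]; ring
      rw [key]
      have h1 : M x * x - θ * F x ≤ 0 := by linarith [hK x hx0]
      have h2 : (0:ℝ) ≤ x ^ (-θ - 1) := Real.rpow_nonneg hx0.le _
      exact mul_nonpos_of_nonpos_of_nonneg h1 h2
  have h' := hanti (self_mem_Ici) hu hu
  have hu0 : (0:ℝ) < u := lt_of_lt_of_le one_pos hu
  have hG1 : G 1 = F 1 := by simp [hG]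
  have hGu : G u = F u * u ^ (-θ) := rfl
  rw [hG1, hGu] at h'
  calc F u = F u * u ^ (-θ) * u ^ θ := by
        rw [mul_assoc, ← Real.rpow_add hu0]; simp
    _ ≤ F 1 * u ^ θ := by
        apply mul_le_mul_of_nonneg_right h' (Real.rpow_nonneg hu0.le _)

section
variable {M₁ M₂ : ℝ → ℝ}


set_option maxHeartbeats 1600000 in
/-- Paper's Proposition 3.1: there is `t₀ > 0` with
`(1/p)(M̂₁(t₀^p A₁) + M̂₂(t₀^p A₂)) - (t₀^{p^*}/p^*) B
= (s/n - (θ-1)/(θp)) a^{-n/(sp^*)} (mS/θ)^{n/(sp)}`. -/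
theorem stmt_10 (s p n pstar A₁ A₂ B a S m₁ m₂ m θ₁ θ₂ θ : ℝ)
    (M₁ M₂ : ℝ → ℝ)
    (hs0 : 0 < s) (hs1 : s < 1) (hp : 1 < p) (hn : s * p < n)
    (hpstar : pstar = n * p / (n - s * p))
    (hM₁c : ContinuousOn M₁ (Set.Ici 0)) (hM₂c : ContinuousOn M₂ (Set.Ici 0))
    (hm₁ : 0 < m₁) (hm₂ : 0 < m₂)
    (hM₁ : ∀ t : ℝ, 0 ≤ t → m₁ ≤ M₁ t) (hM₂ : ∀ t : ℝ, 0 ≤ t → m₂ ≤ M₂ t)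
    (hm : m = min m₁ m₂)
    (hθ₁ : 1 ≤ θ₁) (hθ₁' : θ₁ < pstar / p)
    (hθ₂ : 1 ≤ θ₂) (hθ₂' : θ₂ < pstar / p)
    (hH₃M₁ : ∀ t : ℝ, 0 < t → M₁ t * t ≤ θ₁ * ∫ τ in (0:ℝ)..t, M₁ τ)
    (hH₃M₂ : ∀ t : ℝ, 0 < t → M₂ t * t ≤ θ₂ * ∫ τ in (0:ℝ)..t, M₂ τ)
    (hθ : θ = max θ₁ θ₂)
    (hA₁ : 0 < A₁) (hA₂ : 0 < A₂) (hB : 0 < B) (ha : 0 < a) (hS : 0 < S)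
    (hBle : B ≤ a * S ^ (-(pstar / p)) * (A₁ + A₂) ^ (pstar / p)) :
    ∃ t₀ : ℝ, 0 < t₀ ∧
      1 / p * ((∫ τ in (0:ℝ)..(t₀ ^ p * A₁), M₁ τ)
          + ∫ τ in (0:ℝ)..(t₀ ^ p * A₂), M₂ τ)
        - t₀ ^ pstar / pstar * B
      = (s / n - (θ - 1) / (θ * p)) * a ^ (-(n / (s * pstar)))
          * (m * S / θ) ^ (n / (s * p)) := by
  -- basic positivity and exponent facts
  have hp0 : (0:ℝ) < p := by linarith only [hp]
  have hsp0 : (0:ℝ) < s * p := by positivity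
  have hn0 : (0:ℝ) < n := lt_trans hsp0 hn
  have hnsp : (0:ℝ) < n - s * p := by linarith only [hn]
  have hq0 : 0 < pstar := by rw [hpstar]; positivity
  have hqp : p < pstar := by
    rw [hpstar, lt_div_iff₀ hnsp]; nlinarith only [mul_pos hsp0 hp0]
  have hqsub : (0:ℝ) < pstar - p := by linarith only [hqp]
  have hm0 : 0 < m := by rw [hm]; exact lt_min hm₁ hm₂
  have hmle₁ : m ≤ m₁ := hm ▸ min_le_left _ _
  have hmle₂ : m ≤ m₂ := hm ▸ min_le_right _ _
  have hθ1 : 1 ≤ θ := hθ ▸ le_trans hθ₁ (le_max_left _ _)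
  have hθ0 : (0:ℝ) < θ := by linarith only [hθ1]
  have hθlt : θ < pstar / p := by rw [hθ]; exact max_lt hθ₁' hθ₂'
  set A := A₁ + A₂ with hAdef
  have hA0 : (0:ℝ) < A := by positivity
  -- exponent identities
  have hpne : p ≠ 0 := hp0.ne'
  have hsne : s ≠ 0 := hs0.ne'
  have hnne : n ≠ 0 := hn0.ne'
  have hnspne : n - s * p ≠ 0 := hnsp.ne'
  have hqne : pstar ≠ 0 := hq0.ne'
  have hqpne : pstar - p ≠ 0 := hqsub.ne'
  have e1 : 1 / p - 1 / pstar = s / n := by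
    rw [hpstar]; field_simp; ring
  have e3 : p / (pstar - p) = n / (s * pstar) := by
    have hd : pstar - p = s * p * p / (n - s * p) := by
      rw [hpstar, div_sub' hnspne, div_left_inj' hnspne]; ring
    rw [hd, hpstar]; field_simp
  have e5 : (pstar / p) * (n / (s * pstar)) = n / (s * p) := by
    field_simp
  have e6 : 1 + n / (s * pstar) = n / (s * p) := by
    rw [hpstar]
    have h1 : s * (n * p / (n - s * p)) = s * n * p / (n - s * p) := by ring
    field_simp
    ring
  -- the target constant
  set c := (s / n - (θ - 1) / (θ * p)) * a ^ (-(n / (s * pstar)))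
      * (m * S / θ) ^ (n / (s * p)) with hcdef
  have hfac : 0 < s / n - (θ - 1) / (θ * p) := by
    have hθn : θ * (n - s * p) < n := by
      have : θ < n / (n - s * p) := by
        have : pstar / p = n / (n - s * p) := by rw [hpstar]; field_simp
        rwa [this] at hθlt
      calc θ * (n - s * p) < (n / (n - s * p)) * (n - s * p) := by
            exact mul_lt_mul_of_pos_right this hnsp
        _ = n := by field_simp
    rw [sub_pos, div_lt_div_iff₀ (by positivity) hn0]
    nlinarith only [hθn, hs0, hp0, hn0, hθ0]
  have hc0 : 0 < c := by
    have h2 : (0:ℝ) < a ^ (-(n / (s * pstar))) := Real.rpow_pos_of_pos ha _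
    have h3 : (0:ℝ) < (m * S / θ) ^ (n / (s * p)) :=
      Real.rpow_pos_of_pos (by positivity) _
    positivity
  -- the function f
  set f := fun t : ℝ => 1 / p * ((∫ τ in (0:ℝ)..(t ^ p * A₁), M₁ τ)
      + ∫ τ in (0:ℝ)..(t ^ p * A₂), M₂ τ) - t ^ pstar / pstar * B with hfdef
  -- the test point
  set r := m * A / B with hrdef
  have hr0 : (0:ℝ) < r := by positivity
  set tst := r ^ (1 / (pstar - p)) with htstdef
  have htst0 : 0 < tst := Real.rpow_pos_of_pos hr0 _
  -- lower bound : c ≤ f tst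
  have hlow : c ≤ f tst := by
    have htp : tst ^ p = r ^ (p / (pstar - p)) := by
      rw [htstdef, ← Real.rpow_mul hr0.le]
      congr 1; field_simp
    have htq : tst ^ pstar = r ^ (p / (pstar - p)) * r := by
      rw [htstdef, ← Real.rpow_mul hr0.le]
      rw [show 1 / (pstar - p) * pstar = p / (pstar - p) + 1 by field_simp; ring]
      rw [Real.rpow_add hr0, Real.rpow_one]
    have hi₁ : m * (tst ^ p * A₁) ≤ ∫ τ in (0:ℝ)..(tst ^ p * A₁), M₁ τ :=
      prim_lower hM₁c (fun t ht => le_trans hmle₁ (hM₁ t ht))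
        (by positivity)
    have hi₂ : m * (tst ^ p * A₂) ≤ ∫ τ in (0:ℝ)..(tst ^ p * A₂), M₂ τ :=
      prim_lower hM₂c (fun t ht => le_trans hmle₂ (hM₂ t ht))
        (by positivity)
    have hg : 1 / p * (m * A * tst ^ p) - tst ^ pstar / pstar * B ≤ f tst := by
      simp only [hfdef]
      have heq : m * A * tst ^ p = m * (tst ^ p * A₁) + m * (tst ^ p * A₂) := by
        rw [hAdef]; ring
      rw [heq]
      exact sub_le_sub_right
        (mul_le_mul_of_nonneg_left (add_le_add hi₁ hi₂) (by positivity)) _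
    have hgval : 1 / p * (m * A * tst ^ p) - tst ^ pstar / pstar * B
        = (s / n) * (m * A) * r ^ (n / (s * pstar)) := by
      rw [htp, htq, ← e3]
      have hBr : r * B = m * A := by rw [hrdef]; field_simp
      linear_combination (m * A * r ^ (p / (pstar - p))) * e1
        - (r ^ (p / (pstar - p)) / pstar) * hBr
    -- lower bound on r
    have hrlow : (m / a) * S ^ (pstar / p) * A ^ (1 - pstar / p) ≤ r := by
      have hD0 : (0:ℝ) < a * S ^ (-(pstar / p)) * A ^ (pstar / p) := by
        have := Real.rpow_pos_of_pos hS (-(pstar / p))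
        have := Real.rpow_pos_of_pos hA0 (pstar / p)
        positivity
      have h1 : m * A / (a * S ^ (-(pstar / p)) * A ^ (pstar / p)) ≤ r := by
        rw [hrdef]
        exact div_le_div_of_nonneg_left (by positivity) hB hBle
      calc (m / a) * S ^ (pstar / p) * A ^ (1 - pstar / p)
          = m * A / (a * S ^ (-(pstar / p)) * A ^ (pstar / p)) := by
            rw [Real.rpow_neg hS.le, Real.rpow_sub hA0, Real.rpow_one]
            field_simp
        _ ≤ r := h1
    have hrlow0 : (0:ℝ) < (m / a) * S ^ (pstar / p) * A ^ (1 - pstar / p) := by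
      have := Real.rpow_pos_of_pos hS (pstar / p)
      have := Real.rpow_pos_of_pos hA0 (1 - pstar / p)
      positivity
    have hrp : ((m / a) * S ^ (pstar / p) * A ^ (1 - pstar / p)) ^ (n / (s * pstar))
        ≤ r ^ (n / (s * pstar)) :=
      Real.rpow_le_rpow hrlow0.le hrlow (by positivity)
    -- the value of the lower bound
    have hval : (s / n) * (m * A)
          * (((m / a) * S ^ (pstar / p) * A ^ (1 - pstar / p)) ^ (n / (s * pstar)))
        = (s / n) * a ^ (-(n / (s * pstar))) * (m * S) ^ (n / (s * p)) := by
      set E := n / (s * pstar) with hEdef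
      rw [Real.mul_rpow (mul_nonneg (div_nonneg hm0.le ha.le) (Real.rpow_nonneg hS.le _))
            (Real.rpow_nonneg hA0.le _),
          Real.mul_rpow (div_nonneg hm0.le ha.le) (Real.rpow_nonneg hS.le _),
          ← Real.rpow_mul hS.le, ← Real.rpow_mul hA0.le,
          Real.div_rpow hm0.le ha.le, e5,
          Real.mul_rpow hm0.le hS.le, Real.rpow_neg ha.le]
      have hAe : A * A ^ ((1 - pstar / p) * E) = 1 := by
        have hexp : (1 - pstar / p) * E = -1 := by linear_combination e6 - e5
        rw [hexp, Real.rpow_neg_one]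
        field_simp
      have hme : m * m ^ E = m ^ (n / (s * p)) := by
        rw [← e6, Real.rpow_add hm0, Real.rpow_one]
      have haE : a ^ E ≠ 0 := (Real.rpow_pos_of_pos ha E).ne'
      linear_combination (s / n) * (S ^ (n / (s * p)) / a ^ E) * (m ^ (n / (s * p))) * hAe
        + (s / n) * (S ^ (n / (s * p)) / a ^ E) * (A * A ^ ((1 - pstar / p) * E)) * hme
    -- c ≤ the lower-bound value
    have hcle : c ≤ (s / n) * a ^ (-(n / (s * pstar))) * (m * S) ^ (n / (s * p)) := by
      rw [hcdef]
      have h1 : s / n - (θ - 1) / (θ * p) ≤ s / n := by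
        have h0 : 0 ≤ (θ - 1) / (θ * p) := div_nonneg (by linarith only [hθ1]) (by positivity)
        linarith only [h0]
      have h2 : (m * S / θ) ^ (n / (s * p)) ≤ (m * S) ^ (n / (s * p)) := by
        apply Real.rpow_le_rpow (by positivity) _ (by positivity)
        exact div_le_self (by positivity) hθ1
      have ha' : (0:ℝ) < a ^ (-(n / (s * pstar))) := Real.rpow_pos_of_pos ha _
      have h3 : (0:ℝ) ≤ (m * S / θ) ^ (n / (s * p)) := Real.rpow_nonneg (by positivity) _
      exact mul_le_mul (mul_le_mul h1 le_rfl ha'.le (by positivity)) h2 h3 (by positivity)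
    calc c ≤ (s / n) * a ^ (-(n / (s * pstar))) * (m * S) ^ (n / (s * p)) := hcle
      _ = (s / n) * (m * A)
          * (((m / a) * S ^ (pstar / p) * A ^ (1 - pstar / p)) ^ (n / (s * pstar))) := hval.symm
      _ ≤ (s / n) * (m * A) * r ^ (n / (s * pstar)) := by
          apply mul_le_mul_of_nonneg_left hrp (by positivity)
      _ = 1 / p * (m * A * tst ^ p) - tst ^ pstar / pstar * B := hgval.symm
      _ ≤ f tst := hg
  -- upper bound: find T with f T ≤ c
  set C₁ := (∫ τ in (0:ℝ)..1, M₁ τ) with hC₁def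
  set C₂ := (∫ τ in (0:ℝ)..1, M₂ τ) with hC₂def
  have hC₁0 : 0 ≤ C₁ := by
    have h := prim_lower hM₁c hM₁ zero_le_one
    rw [← hC₁def] at h; linarith only [h, hm₁]
  have hC₂0 : 0 ≤ C₂ := by
    have h := prim_lower hM₂c hM₂ zero_le_one
    rw [← hC₂def] at h; linarith only [h, hm₂]
  set D₁ := C₁ * A₁ ^ θ₁ with hD₁def
  set D₂ := C₂ * A₂ ^ θ₂ with hD₂def
  have hD₁0 : 0 ≤ D₁ := mul_nonneg hC₁0 (Real.rpow_nonneg hA₁.le _)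
  have hD₂0 : 0 ≤ D₂ := mul_nonneg hC₂0 (Real.rpow_nonneg hA₂.le _)
  have hε₁ : p * θ₁ - pstar < 0 := by
    have h := (lt_div_iff₀ hp0).mp hθ₁'
    linarith only [h]
  have hε₂ : p * θ₂ - pstar < 0 := by
    have h := (lt_div_iff₀ hp0).mp hθ₂'
    linarith only [h]
  have htend : Tendsto (fun T : ℝ => 1 / p * (D₁ * T ^ (p * θ₁ - pstar)
      + D₂ * T ^ (p * θ₂ - pstar))) atTop (𝓝 0) := by
    have h₁ : Tendsto (fun T : ℝ => T ^ (p * θ₁ - pstar)) atTop (𝓝 0) := by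
      have h := tendsto_rpow_neg_atTop (y := pstar - p * θ₁) (by linarith only [hε₁])
      simpa [neg_sub] using h
    have h₂ : Tendsto (fun T : ℝ => T ^ (p * θ₂ - pstar)) atTop (𝓝 0) := by
      have h := tendsto_rpow_neg_atTop (y := pstar - p * θ₂) (by linarith only [hε₂])
      simpa [neg_sub] using h
    have h := ((h₁.const_mul D₁).add (h₂.const_mul D₂)).const_mul (1 / p)
    simpa using h
  have hev : ∀ᶠ T in atTop, 1 / p * (D₁ * T ^ (p * θ₁ - pstar)
      + D₂ * T ^ (p * θ₂ - pstar)) ≤ B / (2 * pstar) :=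
    htend.eventually_le_const (by positivity)
  obtain ⟨T, hT⟩ := ((((hev.and (eventually_ge_atTop (1:ℝ))).and
      (eventually_ge_atTop tst)).and
      (eventually_ge_atTop ((1 / A₁) ^ (1 / p)))).and
      (eventually_ge_atTop ((1 / A₂) ^ (1 / p)))).exists
  obtain ⟨⟨⟨⟨hTev, hT1⟩, hTtst⟩, hTA₁'⟩, hTA₂'⟩ := hT
  have hT0 : (0:ℝ) < T := lt_of_lt_of_le one_pos hT1
  have hTpA : ∀ {Ai : ℝ}, 0 < Ai → (1 / Ai) ^ (1 / p) ≤ T → 1 ≤ T ^ p * Ai := by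
    intro Ai hAi hTAi
    have h2 : ((1 / Ai) ^ (1 / p)) ^ p ≤ T ^ p :=
      Real.rpow_le_rpow (Real.rpow_nonneg (by positivity) _) hTAi hp0.le
    rw [← Real.rpow_mul (by positivity),
      show 1 / p * p = 1 by field_simp, Real.rpow_one] at h2
    calc (1:ℝ) = (1 / Ai) * Ai := by field_simp
      _ ≤ T ^ p * Ai := mul_le_mul_of_nonneg_right h2 hAi.le
  have hTpA₁ : 1 ≤ T ^ p * A₁ := hTpA hA₁ hTA₁'
  have hTpA₂ : 1 ≤ T ^ p * A₂ := hTpA hA₂ hTA₂'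
  have hfT : f T ≤ c := by
    have hg₁ : (∫ τ in (0:ℝ)..(T ^ p * A₁), M₁ τ) ≤ C₁ * (T ^ p * A₁) ^ θ₁ := by
      have := prim_growth hM₁c hH₃M₁ hTpA₁
      rwa [← hC₁def] at this
    have hg₂ : (∫ τ in (0:ℝ)..(T ^ p * A₂), M₂ τ) ≤ C₂ * (T ^ p * A₂) ^ θ₂ := by
      have := prim_growth hM₂c hH₃M₂ hTpA₂
      rwa [← hC₂def] at this
    have hsplit : ∀ {Ai θi : ℝ}, 0 < Ai → (T ^ p * Ai) ^ θi
        = T ^ pstar * T ^ (p * θi - pstar) * Ai ^ θi := by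
      intro Ai θi hAi
      rw [Real.mul_rpow (Real.rpow_nonneg hT0.le _) hAi.le,
        ← Real.rpow_mul hT0.le, ← Real.rpow_add hT0]
      ring_nf
    have hsum : (∫ τ in (0:ℝ)..(T ^ p * A₁), M₁ τ) + (∫ τ in (0:ℝ)..(T ^ p * A₂), M₂ τ)
        ≤ T ^ pstar * (D₁ * T ^ (p * θ₁ - pstar) + D₂ * T ^ (p * θ₂ - pstar)) := by
      calc (∫ τ in (0:ℝ)..(T ^ p * A₁), M₁ τ) + (∫ τ in (0:ℝ)..(T ^ p * A₂), M₂ τ)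
          ≤ C₁ * (T ^ p * A₁) ^ θ₁ + C₂ * (T ^ p * A₂) ^ θ₂ := add_le_add hg₁ hg₂
        _ = T ^ pstar * (D₁ * T ^ (p * θ₁ - pstar) + D₂ * T ^ (p * θ₂ - pstar)) := by
            rw [hsplit hA₁, hsplit hA₂, hD₁def, hD₂def]; ring
    have key : f T ≤ T ^ pstar * (1 / p * (D₁ * T ^ (p * θ₁ - pstar)
        + D₂ * T ^ (p * θ₂ - pstar)) - B / pstar) := by
      simp only [hfdef]
      calc 1 / p * ((∫ τ in (0:ℝ)..(T ^ p * A₁), M₁ τ)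
            + ∫ τ in (0:ℝ)..(T ^ p * A₂), M₂ τ) - T ^ pstar / pstar * B
          ≤ 1 / p * (T ^ pstar * (D₁ * T ^ (p * θ₁ - pstar) + D₂ * T ^ (p * θ₂ - pstar)))
            - T ^ pstar / pstar * B :=
            sub_le_sub_right (mul_le_mul_of_nonneg_left hsum (by positivity)) _
        _ = T ^ pstar * (1 / p * (D₁ * T ^ (p * θ₁ - pstar)
            + D₂ * T ^ (p * θ₂ - pstar)) - B / pstar) := by ring
    have hbr : 1 / p * (D₁ * T ^ (p * θ₁ - pstar) + D₂ * T ^ (p * θ₂ - pstar)) - B / pstar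
        ≤ -(B / (2 * pstar)) := by
      have hhalf : B / (2 * pstar) - B / pstar = -(B / (2 * pstar)) := by
        field_simp; ring
      linarith only [hhalf, hTev]
    have hTq1 : (1:ℝ) ≤ T ^ pstar := Real.one_le_rpow hT1 hq0.le
    have hBpos : 0 < B / (2 * pstar) := by positivity
    calc f T ≤ T ^ pstar * (1 / p * (D₁ * T ^ (p * θ₁ - pstar)
          + D₂ * T ^ (p * θ₂ - pstar)) - B / pstar) := key
      _ ≤ T ^ pstar * (-(B / (2 * pstar))) :=
          mul_le_mul_of_nonneg_left hbr (Real.rpow_nonneg hT0.le _)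
      _ ≤ 1 * (-(B / (2 * pstar))) := by
          apply mul_le_mul_of_nonpos_right hTq1 (by linarith only [hBpos])
      _ ≤ c := by linarith only [hc0, hBpos]
  -- continuity of f on [tst, T]
  have hcont : ContinuousOn f (Icc tst T) := by
    have hpow : ∀ e : ℝ, ContinuousOn (fun t : ℝ => t ^ e) (Icc tst T) := by
      intro e t ht
      exact (Real.continuousAt_rpow_const t e
        (Or.inl (ne_of_gt (lt_of_lt_of_le htst0 ht.1)))).continuousWithinAt
    have hmap : ∀ {Ai : ℝ}, 0 < Ai →
        MapsTo (fun t : ℝ => t ^ p * Ai) (Icc tst T) (Icc 0 (T ^ p * Ai)) := by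
      intro Ai hAi t ht
      have ht0 : 0 ≤ t := le_trans htst0.le ht.1
      constructor
      · exact mul_nonneg (Real.rpow_nonneg ht0 _) hAi.le
      · exact mul_le_mul_of_nonneg_right (Real.rpow_le_rpow ht0 ht.2 hp0.le) hAi.le
    have hFcont : ∀ (M : ℝ → ℝ), ContinuousOn M (Ici 0) → ∀ {K : ℝ}, 0 ≤ K →
        ContinuousOn (fun u => ∫ τ in (0:ℝ)..u, M τ) (Icc 0 K) := by
      intro M hMc K hK
      have hint : IntegrableOn M (uIcc 0 K) MeasureTheory.volume := by
        rw [uIcc_of_le hK]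
        exact (hMc.mono (fun x hx => hx.1)).integrableOn_Icc
      have h := intervalIntegral.continuousOn_primitive_interval hint
      rwa [uIcc_of_le hK] at h
    have hK₁ : (0:ℝ) ≤ T ^ p * A₁ := le_trans zero_le_one hTpA₁
    have hK₂ : (0:ℝ) ≤ T ^ p * A₂ := le_trans zero_le_one hTpA₂
    simp only [hfdef]
    apply ContinuousOn.sub
    · apply ContinuousOn.mul continuousOn_const
      apply ContinuousOn.add
      · exact (hFcont M₁ hM₁c hK₁).comp ((hpow p).mul continuousOn_const) (hmap hA₁)
      · exact (hFcont M₂ hM₂c hK₂).comp ((hpow p).mul continuousOn_const) (hmap hA₂)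
    · exact ((hpow pstar).div_const pstar).mul continuousOn_const
  -- intermediate value theorem
  have hmem : c ∈ Icc (f T) (f tst) := ⟨hfT, hlow⟩
  obtain ⟨t₀, ht₀mem, ht₀val⟩ := intermediate_value_Icc' hTtst hcont hmem
  refine ⟨t₀, lt_of_lt_of_le htst0 ht₀mem.1, ?_⟩
  simp only [hfdef] at ht₀val
  exact ht₀val
end
end

section
/- Assume 1 < q < p, q < p^*, θp ≤ p^*, and let γ, S, ω, λ > 0. Let A₁ ≥ 0, A₂ ≥ 0 and C be reals with 0 ≤ C ≤ γ S^{−q/p} ω^{(p^*−q)/p^*} (A₁+A₂)^{q/p}, and set B = A₁M₁(A₁) + A₂M₂(A₂) − λqC (the Nehari relation). Then (1/p)(M̂₁(A₁) + M̂₂(A₂)) − B/p^* − λC ≥ m (1/(θp) − 1/p^*)(A₁+A₂) − λ(1 − q/p^*) γ S^{−q/p} ω^{(p^*−q)/p^*} (A₁+A₂)^{q/p}. (This is the lower bound showing that the energy functional J_λ is coercive and bounded from below on the Nehari manifold.) -/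
open Filter Topology

/-- Coercivity/lower-bound estimate of the energy functional on the Nehari
manifold: under the Nehari relation `B = A₁M₁(A₁) + A₂M₂(A₂) - λqC` and the
bound on `C`, one has
`(1/p)(M̂₁(A₁)+M̂₂(A₂)) - B/p^* - λC ≥ m(1/(θp) - 1/p^*)(A₁+A₂)
 - λ(1-q/p^*) γ S^{-q/p} ω^{(p^*-q)/p^*} (A₁+A₂)^{q/p}`. -/
theorem stmt_11 (q p pstar γ S ω lam A₁ A₂ B C m₁ m₂ m θ₁ θ₂ θ : ℝ)
    (M₁ M₂ : ℝ → ℝ)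
    (hq : 1 < q) (hqp : q < p) (hqpstar : q < pstar) (hppstar : p < pstar)
    (hθp : θ * p ≤ pstar)
    (hγ : 0 < γ) (hS : 0 < S) (hω : 0 < ω) (hlam : 0 < lam)
    (hM₁c : ContinuousOn M₁ (Set.Ici 0)) (hM₂c : ContinuousOn M₂ (Set.Ici 0))
    (hm₁ : 0 < m₁) (hm₂ : 0 < m₂)
    (hM₁ : ∀ t : ℝ, 0 ≤ t → m₁ ≤ M₁ t) (hM₂ : ∀ t : ℝ, 0 ≤ t → m₂ ≤ M₂ t)
    (hm : m = min m₁ m₂)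
    (hθ₁ : 1 ≤ θ₁) (hθ₁' : θ₁ < pstar / p)
    (hθ₂ : 1 ≤ θ₂) (hθ₂' : θ₂ < pstar / p)
    (hH₃M₁ : ∀ t : ℝ, 0 < t → M₁ t * t ≤ θ₁ * ∫ τ in (0:ℝ)..t, M₁ τ)
    (hH₃M₂ : ∀ t : ℝ, 0 < t → M₂ t * t ≤ θ₂ * ∫ τ in (0:ℝ)..t, M₂ τ)
    (hθ : θ = max θ₁ θ₂)
    (hA₁ : 0 ≤ A₁) (hA₂ : 0 ≤ A₂)
    (hC0 : 0 ≤ C)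
    (hCle : C ≤ γ * S ^ (-(q / p)) * ω ^ ((pstar - q) / pstar) * (A₁ + A₂) ^ (q / p))
    (hB : B = A₁ * M₁ A₁ + A₂ * M₂ A₂ - lam * q * C) :
    1 / p * ((∫ τ in (0:ℝ)..A₁, M₁ τ) + ∫ τ in (0:ℝ)..A₂, M₂ τ)
        - B / pstar - lam * C
      ≥ m * (1 / (θ * p) - 1 / pstar) * (A₁ + A₂)
          - lam * (1 - q / pstar) * γ * S ^ (-(q / p)) * ω ^ ((pstar - q) / pstar)
            * (A₁ + A₂) ^ (q / p) := by
  have hp0 : (0:ℝ) < p := by linarith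
  have hps0 : (0:ℝ) < pstar := by linarith
  have hθ1 : (1:ℝ) ≤ θ := by rw [hθ]; exact le_max_of_le_left hθ₁
  have hθ0 : (0:ℝ) < θ := by linarith
  have hθp0 : (0:ℝ) < θ * p := by positivity
  have hm₁' : m ≤ m₁ := by rw [hm]; exact min_le_left _ _
  have hm₂' : m ≤ m₂ := by rw [hm]; exact min_le_right _ _
  have hm0 : 0 < m := by rw [hm]; exact lt_min hm₁ hm₂
  set I₁ : ℝ := ∫ τ in (0:ℝ)..A₁, M₁ τ with hI₁def
  set I₂ : ℝ := ∫ τ in (0:ℝ)..A₂, M₂ τ with hI₂def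
  set D : ℝ := γ * S ^ (-(q / p)) * ω ^ ((pstar - q) / pstar) * (A₁ + A₂) ^ (q / p)
    with hDdef
  have hint₁ : IntervalIntegrable M₁ MeasureTheory.volume 0 A₁ :=
    (hM₁c.mono (by rw [Set.uIcc_of_le hA₁]; intro x hx; exact hx.1)).intervalIntegrable
  have hint₂ : IntervalIntegrable M₂ MeasureTheory.volume 0 A₂ :=
    (hM₂c.mono (by rw [Set.uIcc_of_le hA₂]; intro x hx; exact hx.1)).intervalIntegrable
  have hIA₁ : m₁ * A₁ ≤ I₁ := by
    have h := intervalIntegral.integral_mono_on hA₁ (intervalIntegrable_const (c := m₁))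
      hint₁ (fun x hx => hM₁ x hx.1)
    simpa [mul_comm] using h
  have hIA₂ : m₂ * A₂ ≤ I₂ := by
    have h := intervalIntegral.integral_mono_on hA₂ (intervalIntegrable_const (c := m₂))
      hint₂ (fun x hx => hM₂ x hx.1)
    simpa [mul_comm] using h
  have hI₁nn : 0 ≤ I₁ := le_trans (by positivity) hIA₁
  have hI₂nn : 0 ≤ I₂ := le_trans (by positivity) hIA₂
  have hθ₁θ : θ₁ ≤ θ := by rw [hθ]; exact le_max_left _ _
  have hθ₂θ : θ₂ ≤ θ := by rw [hθ]; exact le_max_right _ _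
  have hK₁ : A₁ * M₁ A₁ ≤ θ * I₁ := by
    rcases hA₁.eq_or_lt with h | h
    · rw [← h]; simp [← hI₁def, ← h]
      positivity
    · calc A₁ * M₁ A₁ = M₁ A₁ * A₁ := mul_comm _ _
        _ ≤ θ₁ * I₁ := hH₃M₁ A₁ h
        _ ≤ θ * I₁ := mul_le_mul_of_nonneg_right hθ₁θ hI₁nn
  have hK₂ : A₂ * M₂ A₂ ≤ θ * I₂ := by
    rcases hA₂.eq_or_lt with h | h
    · rw [← h]; simp [← hI₂def, ← h]
      positivity
    · calc A₂ * M₂ A₂ = M₂ A₂ * A₂ := mul_comm _ _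
        _ ≤ θ₂ * I₂ := hH₃M₂ A₂ h
        _ ≤ θ * I₂ := mul_le_mul_of_nonneg_right hθ₂θ hI₂nn
  have hKθ : A₁ * M₁ A₁ + A₂ * M₂ A₂ ≤ θ * (I₁ + I₂) := by
    have : θ * (I₁ + I₂) = θ * I₁ + θ * I₂ := by ring
    linarith
  -- coefficient nonnegativity
  have hcoef : 0 ≤ 1 / (θ * p) - 1 / pstar := by
    have := one_div_le_one_div_of_le hθp0 hθp
    linarith
  have hfrac : 0 < 1 - q / pstar := by
    have : q / pstar < 1 := (div_lt_one hps0).mpr hqpstar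
    linarith
  -- step 1
  have step1 : (1 / p - θ / pstar) * (I₁ + I₂)
      ≤ 1 / p * (I₁ + I₂) - (A₁ * M₁ A₁ + A₂ * M₂ A₂) / pstar := by
    have h := (div_le_div_iff_of_pos_right hps0).mpr hKθ
    have e : (1 / p - θ / pstar) * (I₁ + I₂)
        = 1 / p * (I₁ + I₂) - (θ * (I₁ + I₂)) / pstar := by ring
    linarith
  -- step 2
  have hmA : m * (A₁ + A₂) ≤ I₁ + I₂ := by
    have t1 : m * A₁ ≤ m₁ * A₁ := mul_le_mul_of_nonneg_right hm₁' hA₁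
    have t2 : m * A₂ ≤ m₂ * A₂ := mul_le_mul_of_nonneg_right hm₂' hA₂
    nlinarith
  have e : 1 / p - θ / pstar = θ * (1 / (θ * p) - 1 / pstar) := by
    field_simp
  have step2 : m * (1 / (θ * p) - 1 / pstar) * (A₁ + A₂)
      ≤ (1 / p - θ / pstar) * (I₁ + I₂) := by
    have t1 : (1 / (θ * p) - 1 / pstar) * (m * (A₁ + A₂))
        ≤ (1 / (θ * p) - 1 / pstar) * (I₁ + I₂) :=
      mul_le_mul_of_nonneg_left hmA hcoef
    have t2 : (1 / (θ * p) - 1 / pstar) * (I₁ + I₂)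
        ≤ θ * ((1 / (θ * p) - 1 / pstar) * (I₁ + I₂)) :=
      le_mul_of_one_le_left (mul_nonneg hcoef (by linarith)) hθ1
    calc m * (1 / (θ * p) - 1 / pstar) * (A₁ + A₂)
        = (1 / (θ * p) - 1 / pstar) * (m * (A₁ + A₂)) := by ring
      _ ≤ (1 / (θ * p) - 1 / pstar) * (I₁ + I₂) := t1
      _ ≤ θ * ((1 / (θ * p) - 1 / pstar) * (I₁ + I₂)) := t2
      _ = (1 / p - θ / pstar) * (I₁ + I₂) := by rw [e]; ring
  -- the C-term estimate
  have h2 : lam * (1 - q / pstar) * C ≤ lam * (1 - q / pstar) * D :=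
    mul_le_mul_of_nonneg_left hCle (by positivity)
  rw [hB]
  have eL : 1 / p * (I₁ + I₂)
        - (A₁ * M₁ A₁ + A₂ * M₂ A₂ - lam * q * C) / pstar - lam * C
      = (1 / p * (I₁ + I₂) - (A₁ * M₁ A₁ + A₂ * M₂ A₂) / pstar)
        - lam * (1 - q / pstar) * C := by ring
  have eR : m * (1 / (θ * p) - 1 / pstar) * (A₁ + A₂)
        - lam * (1 - q / pstar) * γ * S ^ (-(q / p)) * ω ^ ((pstar - q) / pstar)
          * (A₁ + A₂) ^ (q / p)
      = m * (1 / (θ * p) - 1 / pstar) * (A₁ + A₂) - lam * (1 - q / pstar) * D := by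
    rw [hDdef]; ring
  linarith
end
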